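/- arXiv:1403.2908 — 2 statements merged into one kernel-verified Lean document; each statement's English description precedes it below -/
import Mathlib

section
/- Let C(z) = (1 − √(1−4z))/(2z) be the Catalan generating function, so C(z) = z·C(z)² + 1. For k ≥ 1 define the formal power series C₀⁽ᵏ⁾(z) by the recursion C₀⁽¹⁾(z) = 1 + 2z·C(z)·C₀⁽¹⁾(z) and, for k ≥ 2, C₀⁽ᵏ⁾(z) = Σ_{i=0}^{k} z·C₀⁽ⁱ⁾(z)·C₀⁽ᵏ⁻ⁱ⁾(z) with C₀⁽⁰⁾(z) = C(z). Then for all k ≥ 1, C₀⁽ᵏ⁾(z) = Cat(k−1)·z^{k−1}·(1−4z)^{−(2k−1)/2}. -/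
open Finset

/-!
Put `s = √(1 - 4z)`, so that `2zC(z) = 1 - s`. In the recursion for `C₀⁽ᵏ⁾`, `k ≥ 2`, the two
terms `i = 0` and `i = k` add up to `(1 - s)·C₀⁽ᵏ⁾`, so `s·C₀⁽ᵏ⁾ = Σ_{0<i<k} z·C₀⁽ⁱ⁾·C₀⁽ᵏ⁻ⁱ⁾`,
and the same holds for `k = 1` with right-hand side `1`. The candidates
`Cat(n)·zⁿ/s^(2n+1)` satisfy these equations, because the powers of `z` and `s` factor out of the
convolution and the Catalan numbers satisfy `Cat(n+1) = Σ Cat(i)·Cat(n-i)`; strong induction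
on `k` concludes.
-/

theorem catalan_succ_eq_sum_range (n : ℕ) :
    catalan (n + 1) = ∑ i ∈ range (n + 1), catalan i * catalan (n - i) := by
  rw [catalan_succ', Nat.sum_antidiagonal_eq_sum_range_succ (fun i j => catalan i * catalan j)]

theorem sum_range_mul_sub_eq_two_mul_add {R : Type*} [CommSemiring R] (a : ℕ → R) (n : ℕ) :
    ∑ i ∈ range (n + 3), a i * a (n + 2 - i) =
      2 * a 0 * a (n + 2) + ∑ i ∈ range (n + 1), a (i + 1) * a (n + 1 - i) := by
  have hsub : ∀ i, n + 2 - (i + 1) = n + 1 - i := fun i => by omega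
  rw [sum_range_succ', sum_range_succ]
  simp only [Nat.sub_zero, Nat.sub_self, hsub]
  ring

section ClosedForm

variable {K : Type*} [Field K]

/-- `Cat(n)·zⁿ/s^(2n+1)`: the claimed value of `C₀⁽ⁿ⁺¹⁾(z)` when `s = √(1-4z)`. -/
def treeGFClosedForm (z s : K) (n : ℕ) : K :=
  catalan n * z ^ n / s ^ (2 * n + 1)

theorem sum_range_mul_treeGFClosedForm {s : K} (hs : s ≠ 0) (z : K) (n : ℕ) :
    ∑ i ∈ range (n + 1), z * treeGFClosedForm z s i * treeGFClosedForm z s (n - i) =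
      s * treeGFClosedForm z s (n + 1) := by
  have hterm : ∀ i ∈ range (n + 1),
      z * treeGFClosedForm z s i * treeGFClosedForm z s (n - i) =
        (catalan i * catalan (n - i) : ℕ) * (z ^ (n + 1) / s ^ (2 * n + 2)) := by
    intro i hi
    obtain ⟨j, rfl⟩ := Nat.exists_eq_add_of_le (Nat.lt_succ_iff.mp (mem_range.mp hi))
    rw [Nat.add_sub_cancel_left, treeGFClosedForm, treeGFClosedForm]
    field_simp
    push_cast
    ring
  rw [sum_congr rfl hterm, ← sum_mul, ← Nat.cast_sum, ← catalan_succ_eq_sum_range,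
    treeGFClosedForm]
  field_simp
  ring

theorem eq_treeGFClosedForm_of_recursion {s : K} (hs : s ≠ 0) {z : K} {f : ℕ → K}
    (h0 : 2 * z * f 0 = 1 - s) (h1 : f 1 = 1 + 2 * z * f 0 * f 1)
    (hk : ∀ k, 2 ≤ k → f k = ∑ i ∈ range (k + 1), z * f i * f (k - i)) (n : ℕ) :
    f (n + 1) = treeGFClosedForm z s n := by
  induction n using Nat.strong_induction_on with
  | _ n ih =>
  apply mul_left_cancel₀ hs
  cases n with
  | zero =>
    rw [treeGFClosedForm, catalan_zero]
    field_simp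
    linear_combination h1 + f 1 * h0
  | succ n =>
    have hconv : ∑ i ∈ range (n + 1), z * f (i + 1) * f (n + 1 - i) =
        s * treeGFClosedForm z s (n + 1) := by
      rw [← sum_range_mul_treeGFClosedForm hs]
      refine sum_congr rfl fun i hi => ?_
      have hi : i ≤ n := Nat.lt_succ_iff.mp (mem_range.mp hi)
      rw [ih i (by omega), show n + 1 - i = n - i + 1 by omega, ih (n - i) (by omega)]
    have hrec := hk (n + 2) le_add_self
    simp only [mul_assoc, ← mul_sum] at hrec hconv
    rw [sum_range_mul_sub_eq_two_mul_add] at hrec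
    linear_combination hrec + f (n + 2) * h0 + hconv

end ClosedForm

/-- Closed form for the generating functions `C₀⁽ᵏ⁾` of planar trees with `k`
labeled vertices: if `C(z) = (1−√(1−4z))/(2z)`, `C₀⁽⁰⁾ = C`,
`C₀⁽¹⁾(z) = 1 + 2z·C(z)·C₀⁽¹⁾(z)` and for `k ≥ 2`
`C₀⁽ᵏ⁾(z) = Σ_{i=0}^{k} z·C₀⁽ⁱ⁾(z)·C₀⁽ᵏ⁻ⁱ⁾(z)`, then for all `k ≥ 1`
`C₀⁽ᵏ⁾(z) = Cat(k−1)·z^{k−1}·(1−4z)^{−(2k−1)/2}` (on `0 < z < 1/4`). -/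
theorem labeled_tree_gf_closed_form (C : ℝ → ℝ) (f : ℕ → ℝ → ℝ)
    (hC : ∀ z ∈ Set.Ioo (0 : ℝ) (1 / 4), C z = (1 - Real.sqrt (1 - 4 * z)) / (2 * z))
    (hf0 : ∀ z ∈ Set.Ioo (0 : ℝ) (1 / 4), f 0 z = C z)
    (hf1 : ∀ z ∈ Set.Ioo (0 : ℝ) (1 / 4), f 1 z = 1 + 2 * z * C z * f 1 z)
    (hfk : ∀ k, 2 ≤ k → ∀ z ∈ Set.Ioo (0 : ℝ) (1 / 4),
      f k z = ∑ i ∈ Finset.range (k + 1), z * f i z * f (k - i) z) :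
    ∀ k, 1 ≤ k → ∀ z ∈ Set.Ioo (0 : ℝ) (1 / 4),
      f k z = (catalan (k - 1) : ℝ) * z ^ (k - 1) *
        (1 - 4 * z) ^ (-((2 * (k : ℝ) - 1) / 2)) := by
  intro k hk z hz
  obtain ⟨n, rfl⟩ := Nat.exists_eq_add_of_le' hk
  have hdisc : 0 < 1 - 4 * z := by linarith [hz.2]
  have hs : √(1 - 4 * z) ≠ 0 := (Real.sqrt_pos.mpr hdisc).ne'
  have h0 : 2 * z * f 0 z = 1 - √(1 - 4 * z) := by
    rw [hf0 z hz, hC z hz]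
    field_simp [hz.1.ne']
  have hpow : (1 - 4 * z) ^ (-((2 * ((n + 1 : ℕ) : ℝ) - 1) / 2)) =
      (√(1 - 4 * z) ^ (2 * n + 1))⁻¹ := by
    rw [Real.rpow_neg hdisc.le, Real.rpow_div_two_eq_sqrt _ hdisc.le, ← Real.rpow_natCast]
    push_cast
    ring_nf
  rw [eq_treeGFClosedForm_of_recursion hs h0 (by rw [hf0 z hz]; exact hf1 z hz)
      (fun k hk => hfk k hk z hz) n, hpow, Nat.add_sub_cancel, treeGFClosedForm, div_eq_mul_inv]
end

section
/- Let a unicellular map have 2n half-edges with boundary cycle γ = α∘σ of length 2n. Every half-edge h is either an up-step (h <_γ σ(h)) or a down-step (σ(h) ≤_γ h), and the number of trisections (down-steps h for which σ(h) is not the minimal half-edge of its vertex) equals 2g, where g is the genus of the map. -/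
/-- The position of a half-edge `h` along the boundary cycle `γ`, starting
from the root half-edge `r`: the least `k` with `γᵏ r = h`. -/
noncomputable def posOf {m : ℕ} (γ : Equiv.Perm (Fin m)) (r h : Fin m) : ℕ :=
  sInf {k : ℕ | (γ ^ k) r = h}

/-- `h` is an up-step if `h <_γ σ(h)`. -/
def IsUpStep {m : ℕ} (σ γ : Equiv.Perm (Fin m)) (r h : Fin m) : Prop :=
  posOf γ r h < posOf γ r (σ h)

/-- `h` is a down-step if `σ(h) ≤_γ h`. -/
def IsDownStep {m : ℕ} (σ γ : Equiv.Perm (Fin m)) (r h : Fin m) : Prop :=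
  posOf γ r (σ h) ≤ posOf γ r h

/-- `h` is the minimal half-edge (w.r.t. `<_γ`) of its vertex (its `σ`-cycle). -/
def IsMinOfVertex {m : ℕ} (σ γ : Equiv.Perm (Fin m)) (r h : Fin m) : Prop :=
  ∀ x, σ.SameCycle h x → posOf γ r h ≤ posOf γ r x

/-- A trisection: a down-step `h` such that `σ(h)` is not the minimal
half-edge of its vertex. -/
def IsTrisection {m : ℕ} (σ γ : Equiv.Perm (Fin m)) (r h : Fin m) : Prop :=
  IsDownStep σ γ r h ∧ ¬ IsMinOfVertex σ γ r (σ h)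

/-- Chapuy's trisection lemma.  In a unicellular map `(σ, α)` on `2n`
half-edges with boundary cycle `γ = α∘σ` rooted at `r`, every half-edge is an
up-step or a down-step, and the number of trisections is exactly `2g`, where
`v` is the number of vertices and the genus `g` satisfies `n + 1 − v = 2g`. -/
theorem trisection_lemma (n : ℕ) (σ α : Equiv.Perm (Fin (2 * n)))
    (hinv : ∀ h, α (α h) = h) (hff : ∀ h, α h ≠ h)
    (r : Fin (2 * n)) (hcyc : ∀ x, (α * σ).SameCycle r x)
    (v g : ℕ)
    (hv : v = Nat.card
      (Quotient (MulAction.orbitRel (Subgroup.zpowers σ) (Fin (2 * n)))))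
    (hg : n + 1 = v + 2 * g) :
    (∀ h, IsUpStep σ (α * σ) r h ∨ IsDownStep σ (α * σ) r h) ∧
      Nat.card {h : Fin (2 * n) // IsTrisection σ (α * σ) r h} = 2 * g := by
  classical
  set γ : Equiv.Perm (Fin (2 * n)) := α * σ with hγdef
  refine ⟨fun h => lt_or_ge (posOf γ r h) (posOf γ r (σ h)), ?_⟩
  -- dispose of the degenerate case n = 0
  rcases Nat.eq_zero_or_pos n with hn | hn
  · exfalso
    have hE : IsEmpty (Fin (2 * n)) := by subst hn; exact Fin.isEmpty'
    have hv0 : v = 0 := by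
      rw [hv]
      exact Nat.card_of_isEmpty
    omega
  -- basic facts about positions along the boundary cycle
  have hcycF : γ.IsCycleOn (Finset.univ : Finset (Fin (2 * n))) := by
    constructor
    · rw [Finset.coe_univ]; exact (Equiv.bijective γ).bijOn_univ
    · intro x _ y _; exact (hcyc x).symm.trans (hcyc y)
  have hcard : (Finset.univ : Finset (Fin (2 * n))).card = 2 * n := by simp
  have key : ∀ (j k : ℕ) (x : Fin (2 * n)),
      (γ ^ j) x = (γ ^ k) x ↔ j % (2 * n) = k % (2 * n) := by
    intro j k x
    rw [hcycF.pow_apply_eq_pow_apply (Finset.mem_univ x), hcard]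
    exact Iff.rfl
  have hsurj : ∀ h : Fin (2 * n), ∃ k, k < 2 * n ∧ (γ ^ k) r = h := by
    have hinj : Function.Injective (fun k : Fin (2 * n) => (γ ^ (k : ℕ)) r) := by
      intro j k hjk
      simp only at hjk
      rw [key] at hjk
      rw [Nat.mod_eq_of_lt j.isLt, Nat.mod_eq_of_lt k.isLt] at hjk
      exact Fin.ext hjk
    have hs := Finite.injective_iff_surjective.mp hinj
    intro h
    obtain ⟨k, hk⟩ := hs h
    exact ⟨k, k.isLt, hk⟩
  have posE : ∀ k, k < 2 * n → posOf γ r ((γ ^ k) r) = k := by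
    intro k hk
    have hmem : k ∈ {j : ℕ | (γ ^ j) r = (γ ^ k) r} := rfl
    refine le_antisymm (Nat.sInf_le hmem) ?_
    have h1 : posOf γ r ((γ ^ k) r) ∈ {j : ℕ | (γ ^ j) r = (γ ^ k) r} :=
      Nat.sInf_mem ⟨k, hmem⟩
    have h2 : posOf γ r ((γ ^ k) r) ≤ k := Nat.sInf_le hmem
    rw [Set.mem_setOf_eq, key,
      Nat.mod_eq_of_lt (lt_of_le_of_lt h2 hk), Nat.mod_eq_of_lt hk] at h1
    omega
  have posSpec : ∀ h : Fin (2 * n),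
      (γ ^ (posOf γ r h)) r = h ∧ posOf γ r h < 2 * n := by
    intro h
    obtain ⟨k, hk, rfl⟩ := hsurj h
    rw [posE k hk]
    exact ⟨rfl, hk⟩
  set P : Fin (2 * n) → ℕ := posOf γ r with hPdef
  have Pinj : Function.Injective P := by
    intro a b hab
    have ha := (posSpec a).1
    have hb := (posSpec b).1
    rw [← ha, ← hb, hPdef] at *
    rw [hab]
  have Plt : ∀ h, P h < 2 * n := fun h => (posSpec h).2
  have Pr : P r = 0 := by
    have := posE 0 (by omega)
    simpa using this
  have Pγ : ∀ h, γ h ≠ r → P (γ h) = P h + 1 := by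
    intro h hne
    have hh := (posSpec h).1
    have hγh : (γ ^ (P h + 1)) r = γ h := by
      rw [pow_succ']
      simp [Equiv.Perm.mul_apply, hh]
    rcases Nat.lt_or_ge (P h + 1) (2 * n) with hlt | hge
    · rw [← hγh]; exact posE _ hlt
    · exfalso
      have hPh : P h + 1 = 2 * n := by have := Plt h; omega
      apply hne
      rw [← hγh, hPh]
      have : (γ ^ (2 * n)) r = (γ ^ 0) r := by
        rw [key]; simp
      simpa using this
  have Pγinv : ∀ x : Fin (2 * n), x ≠ r → P (γ⁻¹ x) + 1 = P x := by
    intro x hx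
    have h1 : γ (γ⁻¹ x) ≠ r := by simpa using hx
    have := Pγ (γ⁻¹ x) h1
    simp only [show γ (γ⁻¹ x) = x from Equiv.apply_symm_apply γ x] at this
    omega
  have h2n : (γ ^ (2 * n)) r = r := by
    have h0 : (γ ^ (2 * n)) r = (γ ^ 0) r := by rw [key]; simp
    simpa using h0
  have Pγinvr : P (γ⁻¹ r) = 2 * n - 1 := by
    have heq : γ⁻¹ r = (γ ^ (2 * n - 1)) r := by
      apply γ.injective
      rw [Equiv.Perm.coe_inv, Equiv.apply_symm_apply]
      have h3 : γ ((γ ^ (2 * n - 1)) r) = (γ ^ (2 * n)) r := by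
        rw [← Equiv.Perm.mul_apply, ← pow_succ',
          show 2 * n - 1 + 1 = 2 * n from by omega]
      rw [h3, h2n]
    rw [heq, posE _ (by omega)]
  have hσγ : ∀ y, σ y = α (γ y) := by
    intro y
    have : γ y = α (σ y) := rfl
    rw [this, hinv]
  -- the set of k with P (α k) < P k has cardinality n
  set S : Finset (Fin (2 * n)) :=
    Finset.univ.filter (fun k => posOf γ r (α k) < posOf γ r k) with hS
  have hrS : r ∉ S := by
    rw [hS, Finset.mem_filter]
    rintro ⟨-, hlt⟩
    rw [← hPdef] at hlt
    omega
  have hScard : S.card = n := by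
    have hcompl : Finset.univ.filter (fun k : Fin (2 * n) => ¬ posOf γ r (α k) < posOf γ r k)
        = Finset.univ.filter (fun k => posOf γ r k < posOf γ r (α k)) := by
      apply Finset.filter_congr
      intro x _
      have hne : posOf γ r (α x) ≠ posOf γ r x := fun h => hff x (Pinj h)
      constructor
      · intro h; omega
      · intro h; omega
    have h1 := Finset.card_filter_add_card_filter_not
      (s := (Finset.univ : Finset (Fin (2 * n))))
      (p := fun k => posOf γ r (α k) < posOf γ r k)
    rw [hcompl, hcard] at h1
    have h2 : (Finset.univ.filter (fun k : Fin (2 * n) =>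
        posOf γ r k < posOf γ r (α k))).card = S.card := by
      apply Finset.card_bij (fun k _ => α k)
      · intro a ha
        rw [Finset.mem_filter] at ha ⊢
        refine ⟨Finset.mem_univ _, ?_⟩
        rw [hinv]
        exact ha.2
      · intro a _ b _ hab
        rw [← hinv a, hab, hinv]
      · intro b hb
        rw [hS, Finset.mem_filter] at hb
        refine ⟨α b, ?_, hinv b⟩
        rw [Finset.mem_filter]
        refine ⟨Finset.mem_univ _, ?_⟩
        rw [hinv]
        exact hb.2
    rw [h2] at h1
    have h3 : (Finset.filter (fun k => posOf γ r (α k) < posOf γ r k)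
        Finset.univ).card = S.card := by
      rw [hS]
    omega
  -- the number of down-steps is n + 1
  have hDS : (Finset.univ.filter (fun h => IsDownStep σ γ r h)).card = n + 1 := by
    have hbij : (Finset.univ.filter (fun h => IsDownStep σ γ r h)).card
        = (insert r S).card := by
      apply Finset.card_bij (fun h _ => γ h)
      · intro a ha
        rw [Finset.mem_filter] at ha
        have hd : posOf γ r (σ a) ≤ posOf γ r a := ha.2
        by_cases hr : γ a = r
        · rw [hr]; exact Finset.mem_insert_self _ _
        · refine Finset.mem_insert_of_mem ?_
          rw [hS, Finset.mem_filter]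
          refine ⟨Finset.mem_univ _, ?_⟩
          have h2 : α (γ a) = σ a := (hσγ a).symm
          rw [h2]
          have h3 := Pγ a hr
          rw [← hPdef] at *
          omega
      · intro a _ b _ hab
        exact γ.injective hab
      · intro x hx
        refine ⟨γ⁻¹ x, ?_, by simp⟩
        rw [Finset.mem_filter]
        refine ⟨Finset.mem_univ _, ?_⟩
        have h2 : σ (γ⁻¹ x) = α x := by rw [hσγ, Equiv.Perm.coe_inv, Equiv.apply_symm_apply]
        show posOf γ r (σ (γ⁻¹ x)) ≤ posOf γ r (γ⁻¹ x)
        rw [h2, ← hPdef]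
        rcases Finset.mem_insert.mp hx with hxr | hxS
        · subst hxr
          have := Plt (α x)
          omega
        · have hxr : x ≠ r := by rintro rfl; exact hrS hxS
          have h3 := Pγinv x hxr
          rw [hS, Finset.mem_filter, ← hPdef] at hxS
          have h4 := hxS.2
          omega
    rw [hbij, Finset.card_insert_of_notMem hrS, hScard]
  -- down-steps split into trisections and per-vertex minimal down-steps
  have hsplit : (Finset.univ.filter (fun h => IsDownStep σ γ r h ∧
          IsMinOfVertex σ γ r (σ h))).card
      + (Finset.univ.filter (fun h => IsDownStep σ γ r h ∧
          ¬ IsMinOfVertex σ γ r (σ h))).card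
      = (Finset.univ.filter (fun h => IsDownStep σ γ r h)).card := by
    have h1 := Finset.card_filter_add_card_filter_not
      (s := Finset.univ.filter (fun h : Fin (2 * n) => IsDownStep σ γ r h))
      (p := fun h => IsMinOfVertex σ γ r (σ h))
    rwa [Finset.filter_filter, Finset.filter_filter] at h1
  -- the minimal down-steps biject with the per-vertex minima
  have hNM : (Finset.univ.filter (fun h => IsDownStep σ γ r h ∧
          IsMinOfVertex σ γ r (σ h))).card
      = (Finset.univ.filter (fun μ => IsMinOfVertex σ γ r μ)).card := by
    apply Finset.card_bij (fun h _ => σ h)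
    · intro a ha
      rw [Finset.mem_filter] at ha ⊢
      exact ⟨Finset.mem_univ _, ha.2.2⟩
    · intro a _ b _ hab
      exact σ.injective hab
    · intro b hb
      rw [Finset.mem_filter] at hb
      refine ⟨σ⁻¹ b, ?_, Equiv.apply_symm_apply σ b⟩
      rw [Finset.mem_filter]
      refine ⟨Finset.mem_univ _, ?_, ?_⟩
      · show posOf γ r (σ (σ⁻¹ b)) ≤ posOf γ r (σ⁻¹ b)
        rw [Equiv.Perm.coe_inv, Equiv.apply_symm_apply]
        exact hb.2 (σ⁻¹ b) ⟨-1, by simp⟩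
      · rw [Equiv.Perm.coe_inv, Equiv.apply_symm_apply]
        exact hb.2
  -- the per-vertex minima biject with the vertices
  have hMv : (Finset.univ.filter (fun μ => IsMinOfVertex σ γ r μ)).card = v := by
    rw [hv]
    have hq : ∀ a b : Fin (2 * n),
        (Quotient.mk (MulAction.orbitRel (Subgroup.zpowers σ) (Fin (2 * n))) a
          = Quotient.mk _ b) ↔ σ.SameCycle a b := by
      intro a b
      rw [Quotient.eq]
      change MulAction.orbitRel _ _ a b ↔ _
      rw [MulAction.orbitRel_apply, MulAction.mem_orbit_iff]
      constructor
      · rintro ⟨⟨gp, k, rfl⟩, hgb⟩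
        exact Equiv.Perm.SameCycle.symm ⟨k, hgb⟩
      · rintro ⟨k, hk⟩
        exact ⟨⟨σ ^ (-k), -k, rfl⟩, by simp [← hk]⟩
    have hbij : Function.Bijective
        (fun μ : {x // x ∈ Finset.univ.filter (fun μ => IsMinOfVertex σ γ r μ)} =>
          Quotient.mk (MulAction.orbitRel (Subgroup.zpowers σ) (Fin (2 * n))) μ.1) := by
      constructor
      · rintro ⟨a, ha⟩ ⟨b, hb⟩ hab
        simp only [Finset.mem_filter] at ha hb
        simp only at hab
        rw [hq] at hab
        have h1 := ha.2 b hab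
        have h2 := hb.2 a hab.symm
        exact Subtype.ext (Pinj (le_antisymm h1 h2))
      · intro q
        induction q using Quotient.inductionOn with
        | h x =>
          obtain ⟨μ, hμs, hmin⟩ := Finset.exists_min_image
            (Finset.univ.filter (fun y => σ.SameCycle x y)) P
            ⟨x, by simp [Equiv.Perm.SameCycle.refl]⟩
          refine ⟨⟨μ, ?_⟩, ?_⟩
          · rw [Finset.mem_filter]
            refine ⟨Finset.mem_univ _, ?_⟩
            intro z hz
            have hxz : σ.SameCycle x z :=
              ((Finset.mem_filter.mp hμs).2).trans hz
            exact hmin z (by simp [Finset.mem_filter, hxz])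
          · exact (hq _ _).mpr ((Finset.mem_filter.mp hμs).2).symm
    rw [← Nat.card_eq_of_bijective _ hbij, Nat.card_eq_fintype_card, Fintype.card_coe]
  -- conclude
  have hTcard : Nat.card {h : Fin (2 * n) // IsTrisection σ γ r h}
      = (Finset.univ.filter (fun h => IsDownStep σ γ r h ∧
          ¬ IsMinOfVertex σ γ r (σ h))).card := by
    rw [Nat.card_eq_fintype_card, Fintype.card_subtype]
    congr 1
    apply Finset.filter_congr
    intro x _
    exact Iff.rfl
  rw [hTcard]
  omega
end
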